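/- Let G and H be finite strongly connected graphs with a right resolver Φ: G → H. If U_1, U_2 ⊆ ∂Φ^{-1}(I) are minimal images of Φ for some vertex I of H whose symmetric difference is exactly {J_1, J_2}, then J_1 ∼_Φ J_2. -/

import Mathlib

/-- A finite directed multigraph. -/
structure MGraph where
  V : Type
  E : Type
  [fV : Fintype V]
  [fE : Fintype E]
  src : E → V
  tgt : E → V

attribute [instance] MGraph.fV MGraph.fE

namespace MGraph

/-- `G.IsPathFrom I w` : the list of edges `w` is a path starting at `I`. -/
def IsPathFrom (G : MGraph) : G.V → List G.E → Prop
  | _, [] => True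
  | I, e :: es => G.src e = I ∧ G.IsPathFrom (G.tgt e) es

/-- Terminal vertex of the path `w` starting at `I`. -/
def pathEnd (G : MGraph) : G.V → List G.E → G.V
  | I, [] => I
  | _, e :: es => G.pathEnd (G.tgt e) es

def StronglyConnected (G : MGraph) : Prop :=
  ∀ I J : G.V, ∃ w : List G.E, G.IsPathFrom I w ∧ G.pathEnd I w = J

/-- Graph homomorphism. -/
structure Hom (G H : MGraph) where
  vmap : G.V → H.V
  emap : G.E → H.E
  src_map : ∀ e, H.src (emap e) = vmap (G.src e)
  tgt_map : ∀ e, H.tgt (emap e) = vmap (G.tgt e)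

/-- Right resolving: surjective, and a bijection on outgoing edge sets. -/
def Hom.RightResolving {G H : MGraph} (Φ : Hom G H) : Prop :=
  Function.Surjective Φ.vmap ∧
  ∀ I : G.V, Set.BijOn Φ.emap {e | G.src e = I} {f | H.src f = Φ.vmap I}

/-- Left resolving: surjective, and a bijection on incoming edge sets. -/
def Hom.LeftResolving {G H : MGraph} (Φ : Hom G H) : Prop :=
  Function.Surjective Φ.vmap ∧
  ∀ I : G.V, Set.BijOn Φ.emap {e | G.tgt e = I} {f | H.tgt f = Φ.vmap I}

def Hom.BiResolving {G H : MGraph} (Φ : Hom G H) : Prop :=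
  Φ.RightResolving ∧ Φ.LeftResolving

/-- Forward action: terminal vertices of lifts of `w` starting in `U`. -/
def Hom.fwd {G H : MGraph} (Φ : Hom G H) (U : Set G.V) (w : List H.E) : Set G.V :=
  {J' | ∃ I' ∈ U, ∃ π : List G.E,
    G.IsPathFrom I' π ∧ π.map Φ.emap = w ∧ G.pathEnd I' π = J'}

/-- Backward action: starting vertices whose lift of `w` ends in `S`. -/
def Hom.bwd {G H : MGraph} (Φ : Hom G H) (w : List H.E) (S : Set G.V) : Set G.V :=
  {J' | ∃ π : List G.E,
    G.IsPathFrom J' π ∧ π.map Φ.emap = w ∧ G.pathEnd J' π ∈ S}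

end MGraph

open MGraph


/-- The stability relation of a right resolver: `I₁' ∼_Φ I₂'` iff they are in the same
fiber and for every path `u` from the common image there is a continuation `v` such that
`I₁' ·_Φ uv = I₂' ·_Φ uv` (as sets of endpoints of lifts). -/
def MGraph.Hom.Stable {G H : MGraph} (Φ : MGraph.Hom G H) (I₁ I₂ : G.V) : Prop :=
  Φ.vmap I₁ = Φ.vmap I₂ ∧
  ∀ u : List H.E, H.IsPathFrom (Φ.vmap I₁) u →
    ∃ v : List H.E, H.IsPathFrom (H.pathEnd (Φ.vmap I₁) u) v ∧
      Φ.fwd {I₁} (u ++ v) = Φ.fwd {I₂} (u ++ v)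


/-- Minimal image of a right resolver. -/
def MGraph.Hom.MinImage {G H : MGraph} (Φ : MGraph.Hom G H) (U : Set G.V) : Prop :=
  ∃ (I : H.V) (u : List H.E), H.IsPathFrom I u ∧
    U = Φ.fwd (Φ.vmap ⁻¹' {I}) u ∧
    ∀ v : List H.E, H.IsPathFrom (H.pathEnd I u) v → (Φ.fwd U v).ncard = U.ncard

namespace MGraph

variable {G H : MGraph}

lemma isPathFrom_append (G : MGraph) (I : G.V) (u v : List G.E) :
    G.IsPathFrom I (u ++ v) ↔ G.IsPathFrom I u ∧ G.IsPathFrom (G.pathEnd I u) v := by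
  induction u generalizing I with
  | nil => simp [IsPathFrom, pathEnd]
  | cons e es ih => simp [IsPathFrom, pathEnd, ih, and_assoc]

lemma pathEnd_append (G : MGraph) (I : G.V) (u v : List G.E) :
    G.pathEnd I (u ++ v) = G.pathEnd (G.pathEnd I u) v := by
  induction u generalizing I with
  | nil => rfl
  | cons e es ih => simp [pathEnd, ih]

open Classical in
/-- The transition function along a lifted path (junk value if no lift). -/
noncomputable def Hom.trans (Φ : Hom G H) : G.V → List H.E → G.V
  | I, [] => I
  | I, e :: es =>
      Φ.trans (if h : ∃ e', G.src e' = I ∧ Φ.emap e' = e then G.tgt h.choose else I) es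

@[simp] lemma Hom.trans_nil (Φ : Hom G H) (I : G.V) : Φ.trans I [] = I := rfl

lemma Hom.trans_append (Φ : Hom G H) (I : G.V) (u v : List H.E) :
    Φ.trans I (u ++ v) = Φ.trans (Φ.trans I u) v := by
  induction u generalizing I with
  | nil => rfl
  | cons e es ih => simp only [List.cons_append, Hom.trans]; exact ih _

lemma Hom.trans_main {Φ : Hom G H} (hΦ : Φ.RightResolving) :
    ∀ (w : List H.E) (I : G.V), H.IsPathFrom (Φ.vmap I) w →
      (∃ π, G.IsPathFrom I π ∧ π.map Φ.emap = w ∧ G.pathEnd I π = Φ.trans I w) ∧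
      (∀ π, G.IsPathFrom I π → π.map Φ.emap = w → G.pathEnd I π = Φ.trans I w) ∧
      Φ.vmap (Φ.trans I w) = H.pathEnd (Φ.vmap I) w := by
  intro w
  induction w with
  | nil =>
    intro I _
    refine ⟨⟨[], trivial, rfl, rfl⟩, ?_, rfl⟩
    intro π hπ hmap
    rcases List.map_eq_nil_iff.mp hmap with rfl
    rfl
  | cons e es ih =>
    intro I hpath
    obtain ⟨he, hes⟩ := hpath
    have hex : ∃ e', G.src e' = I ∧ Φ.emap e' = e := by
      obtain ⟨e', he', hmap⟩ := (hΦ.2 I).surjOn (show e ∈ {f | H.src f = Φ.vmap I} from he)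
      exact ⟨e', he', hmap⟩
    have hch := hex.choose_spec
    set e₀ := hex.choose with he₀
    have hv : Φ.vmap (G.tgt e₀) = H.tgt e := by rw [← hch.2, Φ.tgt_map]
    have hes' : H.IsPathFrom (Φ.vmap (G.tgt e₀)) es := by rw [hv]; exact hes
    obtain ⟨⟨π, hπ, hπm, hπe⟩, huniq, hfib⟩ := ih (G.tgt e₀) hes'
    have htr : Φ.trans I (e :: es) = Φ.trans (G.tgt e₀) es := by
      simp only [Hom.trans, dif_pos hex]; rfl
    refine ⟨⟨e₀ :: π, ⟨hch.1, hπ⟩, by simp [hch.2, hπm], by rw [htr]; exact hπe⟩, ?_, ?_⟩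
    · intro π' hπ' hm'
      cases π' with
      | nil => simp at hm'
      | cons f fs =>
        obtain ⟨hf, hfs⟩ := hπ'
        simp only [List.map_cons, List.cons.injEq] at hm'
        have hfe : f = e₀ :=
          (hΦ.2 I).injOn hf hch.1 (by rw [hm'.1, hch.2])
        subst hfe
        rw [htr]
        exact huniq fs hfs hm'.2
    · rw [htr, hfib, hv]; rfl

lemma Hom.fwd_eq_image {Φ : Hom G H} (hΦ : Φ.RightResolving) {I₀ : H.V} {U : Set G.V}
    (hU : U ⊆ Φ.vmap ⁻¹' {I₀}) {w : List H.E} (hw : H.IsPathFrom I₀ w) :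
    Φ.fwd U w = (fun x => Φ.trans x w) '' U := by
  ext J
  constructor
  · rintro ⟨x, hx, π, hπ, hm, rfl⟩
    have hxw : H.IsPathFrom (Φ.vmap x) w := by
      have : Φ.vmap x = I₀ := hU hx
      rw [this]; exact hw
    exact ⟨x, hx, ((Φ.trans_main hΦ w x hxw).2.1 π hπ hm).symm⟩
  · rintro ⟨x, hx, rfl⟩
    have hxw : H.IsPathFrom (Φ.vmap x) w := by
      have : Φ.vmap x = I₀ := hU hx
      rw [this]; exact hw
    obtain ⟨π, h1, h2, h3⟩ := (Φ.trans_main hΦ w x hxw).1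
    exact ⟨x, hx, π, h1, h2, h3⟩

lemma Hom.fwd_fiber {Φ : Hom G H} (hΦ : Φ.RightResolving) {I₀ : H.V} {U : Set G.V}
    (hU : U ⊆ Φ.vmap ⁻¹' {I₀}) {w : List H.E} (hw : H.IsPathFrom I₀ w) :
    Φ.fwd U w ⊆ Φ.vmap ⁻¹' {H.pathEnd I₀ w} := by
  rw [Φ.fwd_eq_image hΦ hU hw]
  rintro J ⟨x, hx, rfl⟩
  have hxw : H.IsPathFrom (Φ.vmap x) w := by
    have : Φ.vmap x = I₀ := hU hx
    rw [this]; exact hw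
  have := (Φ.trans_main hΦ w x hxw).2.2
  simp only [Set.mem_preimage, Set.mem_singleton_iff, this]
  rw [hU hx]

lemma Hom.fwd_mono (Φ : Hom G H) {U U' : Set G.V} (h : U ⊆ U') (w : List H.E) :
    Φ.fwd U w ⊆ Φ.fwd U' w := by
  rintro J ⟨x, hx, π, hπ⟩
  exact ⟨x, h hx, π, hπ⟩

lemma Hom.fwd_append {Φ : Hom G H} (hΦ : Φ.RightResolving) {I₀ : H.V} {U : Set G.V}
    (hU : U ⊆ Φ.vmap ⁻¹' {I₀}) {u v : List H.E} (hu : H.IsPathFrom I₀ u)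
    (hv : H.IsPathFrom (H.pathEnd I₀ u) v) :
    Φ.fwd U (u ++ v) = Φ.fwd (Φ.fwd U u) v := by
  rw [Φ.fwd_eq_image hΦ hU ((H.isPathFrom_append I₀ u v).mpr ⟨hu, hv⟩),
    Φ.fwd_eq_image hΦ (Φ.fwd_fiber hΦ hU hu) hv, Φ.fwd_eq_image hΦ hU hu,
    Set.image_image]
  exact Set.image_congr fun x _ => Φ.trans_append x u v

lemma Hom.fwd_singleton {Φ : Hom G H} (hΦ : Φ.RightResolving) (J : G.V) {w : List H.E}
    (hw : H.IsPathFrom (Φ.vmap J) w) :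
    Φ.fwd {J} w = {Φ.trans J w} := by
  rw [Φ.fwd_eq_image hΦ (by simp) hw, Set.image_singleton]

end MGraph


/-- If two minimal images inside a common fiber have symmetric
difference exactly {J₁, J₂}, then J₁ ∼_Φ J₂. -/
theorem minImage_symmDiff_stable {G H : MGraph} (Φ : MGraph.Hom G H)
    (hΦ : Φ.RightResolving) (hG : G.StronglyConnected) (hH : H.StronglyConnected)
    (I : H.V) (U₁ U₂ : Set G.V)
    (hU₁ : U₁ ⊆ Φ.vmap ⁻¹' {I}) (hU₂ : U₂ ⊆ Φ.vmap ⁻¹' {I})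
    (hm₁ : Φ.MinImage U₁) (hm₂ : Φ.MinImage U₂)
    (J₁ J₂ : G.V) (hsd : symmDiff U₁ U₂ = {J₁, J₂}) :
    Φ.Stable J₁ J₂ := by
  obtain ⟨I₁, u₁, hu₁, hU₁eq, hmin₁⟩ := hm₁
  obtain ⟨I₂, u₂, hu₂, hU₂eq, hmin₂⟩ := hm₂
  -- U₁, U₂ are nonempty
  have hne₁ : U₁.Nonempty := by
    obtain ⟨x, hx⟩ := hΦ.1 I₁
    rw [hU₁eq, Φ.fwd_eq_image hΦ subset_rfl hu₁]
    exact ⟨_, x, by simp [hx], rfl⟩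
  have hne₂ : U₂.Nonempty := by
    obtain ⟨x, hx⟩ := hΦ.1 I₂
    rw [hU₂eq, Φ.fwd_eq_image hΦ subset_rfl hu₂]
    exact ⟨_, x, by simp [hx], rfl⟩
  -- the paths u₁, u₂ end at I
  have hend₁ : H.pathEnd I₁ u₁ = I := by
    obtain ⟨y, hy⟩ := hne₁
    have h1 : Φ.vmap y = H.pathEnd I₁ u₁ := by
      have := Φ.fwd_fiber hΦ subset_rfl hu₁ (hU₁eq ▸ hy)
      simpa using this
    have h2 : Φ.vmap y = I := hU₁ hy
    exact h1.symm.trans h2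
  have hend₂ : H.pathEnd I₂ u₂ = I := by
    obtain ⟨y, hy⟩ := hne₂
    have h1 : Φ.vmap y = H.pathEnd I₂ u₂ := by
      have := Φ.fwd_fiber hΦ subset_rfl hu₂ (hU₂eq ▸ hy)
      simpa using this
    have h2 : Φ.vmap y = I := hU₂ hy
    exact h1.symm.trans h2
  rw [hend₁] at hmin₁
  rw [hend₂] at hmin₂
  -- J₁, J₂ lie in the fiber over I
  have hJmem : ∀ J, J ∈ ({J₁, J₂} : Set G.V) → Φ.vmap J = I := by
    intro J hJ
    rw [← hsd, Set.mem_symmDiff] at hJ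
    rcases hJ with ⟨h, -⟩ | ⟨h, -⟩
    · exact hU₁ h
    · exact hU₂ h
  have hv₁ : Φ.vmap J₁ = I := hJmem J₁ (by simp)
  have hv₂ : Φ.vmap J₂ = I := hJmem J₂ (by simp)
  refine ⟨hv₁.trans hv₂.symm, ?_⟩
  intro u hu
  rw [hv₁] at hu ⊢
  set I' := H.pathEnd I u with hI'
  set S := Φ.fwd (Φ.vmap ⁻¹' {I}) u with hS
  have hSfib : S ⊆ Φ.vmap ⁻¹' {I'} := Φ.fwd_fiber hΦ subset_rfl hu
  -- minimize the image of S
  set T : Set ℕ := {n | ∃ v, H.IsPathFrom I' v ∧ (Φ.fwd S v).ncard = n} with hT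
  have hTne : T.Nonempty := ⟨(Φ.fwd S []).ncard, [], trivial, rfl⟩
  obtain ⟨v, hvpath, hvcard⟩ := Nat.sInf_mem hTne
  set m := sInf T with hm
  have hminT : ∀ v', H.IsPathFrom I' v' → m ≤ (Φ.fwd S v').ncard :=
    fun v' h => Nat.sInf_le ⟨v', h, rfl⟩
  have huv : H.IsPathFrom I (u ++ v) := (H.isPathFrom_append I u v).mpr ⟨hu, hvpath⟩
  -- m ≤ ncard Uᵢ
  have key : ∀ (U₀ : Set G.V) (I₀ : H.V) (u₀ : List H.E), H.IsPathFrom I₀ u₀ →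
      U₀ = Φ.fwd (Φ.vmap ⁻¹' {I₀}) u₀ → m ≤ U₀.ncard := by
    intro U₀ I₀ u₀ hu₀ hU₀eq
    obtain ⟨p, hp, hpend⟩ := hH I' I₀
    have hu₀' : H.IsPathFrom (H.pathEnd I' p) u₀ := by rw [hpend]; exact hu₀
    have hpath' : H.IsPathFrom I' (p ++ u₀) := (H.isPathFrom_append _ _ _).mpr ⟨hp, hu₀'⟩
    have hsub : Φ.fwd S (p ++ u₀) ⊆ U₀ := by
      rw [Φ.fwd_append hΦ hSfib hp hu₀', hU₀eq]
      apply Φ.fwd_mono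
      have := Φ.fwd_fiber hΦ hSfib hp
      rw [hpend] at this
      exact this
    calc m ≤ (Φ.fwd S (p ++ u₀)).ncard := hminT _ hpath'
      _ ≤ U₀.ncard := Set.ncard_le_ncard hsub (Set.toFinite _)
  -- ncard Uᵢ = m and the images coincide with fwd S v
  have hcard₁ : (Φ.fwd U₁ (u ++ v)).ncard = U₁.ncard := hmin₁ (u ++ v) huv
  have hcard₂ : (Φ.fwd U₂ (u ++ v)).ncard = U₂.ncard := hmin₂ (u ++ v) huv
  have hsub₁ : Φ.fwd U₁ (u ++ v) ⊆ Φ.fwd S v := by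
    rw [Φ.fwd_append hΦ hU₁ hu hvpath]
    exact Φ.fwd_mono (Φ.fwd_mono hU₁ u) v
  have hsub₂ : Φ.fwd U₂ (u ++ v) ⊆ Φ.fwd S v := by
    rw [Φ.fwd_append hΦ hU₂ hu hvpath]
    exact Φ.fwd_mono (Φ.fwd_mono hU₂ u) v
  have hU₁m : U₁.ncard = m := by
    refine le_antisymm ?_ (key U₁ I₁ u₁ hu₁ hU₁eq)
    calc U₁.ncard = (Φ.fwd U₁ (u ++ v)).ncard := hcard₁.symm
      _ ≤ (Φ.fwd S v).ncard := Set.ncard_le_ncard hsub₁ (Set.toFinite _)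
      _ = m := hvcard
  have hU₂m : U₂.ncard = m := by
    refine le_antisymm ?_ (key U₂ I₂ u₂ hu₂ hU₂eq)
    calc U₂.ncard = (Φ.fwd U₂ (u ++ v)).ncard := hcard₂.symm
      _ ≤ (Φ.fwd S v).ncard := Set.ncard_le_ncard hsub₂ (Set.toFinite _)
      _ = m := hvcard
  have hM₁ : Φ.fwd U₁ (u ++ v) = Φ.fwd S v :=
    Set.eq_of_subset_of_ncard_le hsub₁
      (by rw [hvcard, hcard₁, hU₁m]) (Set.toFinite _)
  have hM₂ : Φ.fwd U₂ (u ++ v) = Φ.fwd S v :=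
    Set.eq_of_subset_of_ncard_le hsub₂
      (by rw [hvcard, hcard₂, hU₂m]) (Set.toFinite _)
  -- pass to the transition function g
  set g : G.V → G.V := fun x => Φ.trans x (u ++ v) with hg
  have himg₁ : Φ.fwd U₁ (u ++ v) = g '' U₁ := Φ.fwd_eq_image hΦ hU₁ huv
  have himg₂ : Φ.fwd U₂ (u ++ v) = g '' U₂ := Φ.fwd_eq_image hΦ hU₂ huv
  have hinj₁ : Set.InjOn g U₁ :=
    Set.injOn_of_ncard_image_eq (by rw [← himg₁, hcard₁]) (Set.toFinite _)
  have hinj₂ : Set.InjOn g U₂ :=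
    Set.injOn_of_ncard_image_eq (by rw [← himg₂, hcard₂]) (Set.toFinite _)
  have hgim : g '' U₁ = g '' U₂ := by rw [← himg₁, ← himg₂, hM₁, hM₂]
  -- the combinatorial core
  have hkey : g J₁ = g J₂ := by
    by_cases hJJ : J₁ = J₂
    · rw [hJJ]
    have main : ∀ (V₁ V₂ : Set G.V) (K₁ K₂ : G.V), Set.InjOn g V₁ → Set.InjOn g V₂ →
        g '' V₁ = g '' V₂ → symmDiff V₁ V₂ = {K₁, K₂} → K₁ ∈ V₁ → K₁ ∉ V₂ →
        g K₁ = g K₂ := by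
      intro V₁ V₂ K₁ K₂ hi₁ hi₂ himV hsdV hK₁ hK₁'
      have hmem : g K₁ ∈ g '' V₂ := himV ▸ Set.mem_image_of_mem g hK₁
      obtain ⟨x, hx, hgx⟩ := hmem
      have hxn : x ∉ V₁ := by
        intro hxV
        exact hK₁' ((hi₁ hxV hK₁ hgx) ▸ hx)
      have hxm : x ∈ symmDiff V₁ V₂ := Set.mem_symmDiff.mpr (Or.inr ⟨hx, hxn⟩)
      rw [hsdV, Set.mem_insert_iff, Set.mem_singleton_iff] at hxm
      rcases hxm with rfl | rfl
      · exact absurd hx hK₁'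
      · exact hgx.symm
    have hJ₁mem : J₁ ∈ symmDiff U₁ U₂ := by rw [hsd]; simp
    rw [Set.mem_symmDiff] at hJ₁mem
    rcases hJ₁mem with ⟨h1, h2⟩ | ⟨h1, h2⟩
    · exact main U₁ U₂ J₁ J₂ hinj₁ hinj₂ hgim hsd h1 h2
    · exact main U₂ U₁ J₁ J₂ hinj₂ hinj₁ hgim.symm ((symmDiff_comm U₂ U₁).trans hsd) h1 h2
  refine ⟨v, hvpath, ?_⟩
  rw [Φ.fwd_singleton hΦ J₁ (by rw [hv₁]; exact huv),
    Φ.fwd_singleton hΦ J₂ (by rw [hv₂]; exact huv)]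
  exact congrArg (fun x => ({x} : Set G.V)) hkey
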